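/- Suppose the set of saddle points of the Lagrangian L is nonempty and the infinite sequences generated by the inexact augmented Lagrangian method are well-defined. Then the whole dual sequence {p^k} converges to some optimal solution of the dual problem (D). -/

import Mathlib

open scoped RealInnerProductSpace
open Filter

noncomputable section

/-- `Evec m` is `ℝ^m` with the Euclidean norm. -/
abbrev Evec (m : ℕ) := EuclideanSpace ℝ (Fin m)

/-- View a plain function `Fin m → ℝ` as a Euclidean vector. -/
def toE {m : ℕ} (v : Fin m → ℝ) : Evec m := WithLp.toLp 2 v

/-- The dual space `ℝ^{m1} × ℝ^{m2}` with the Euclidean (ℓ²) product norm. -/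
abbrev DualPair (m1 m2 : ℕ) := WithLp 2 (Evec m1 × Evec m2)

def mkDual {m1 m2 : ℕ} (lam : Evec m1) (mu : Evec m2) : DualPair m1 m2 := WithLp.toLp 2 (lam, mu)

/-- The primal-dual space `X × ℝ^{m1+m2}` with the Euclidean (ℓ²) product norm. -/
abbrev Triple (X : Type*) [NormedAddCommGroup X] (m1 m2 : ℕ) :=
  WithLp 2 (X × DualPair m1 m2)

def asT {X : Type*} [NormedAddCommGroup X] {m1 m2 : ℕ}
    (q : X × DualPair m1 m2) : Triple X m1 m2 := WithLp.toLp 2 q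

variable {X : Type*} [NormedAddCommGroup X] [InnerProductSpace ℝ X] [FiniteDimensional ℝ X]
variable {m1 m2 : ℕ}

/-- The Lagrangian `L(x, λ, μ) = f(x) + ⟨λ, h(x)⟩ + ⟨μ, g(x)⟩`. -/
def Lag (f : X → ℝ) (h : X → Evec m1) (g : X → Evec m2)
    (x : X) (lam : Evec m1) (mu : Evec m2) : ℝ :=
  f x + ⟪lam, h x⟫ + ⟪mu, g x⟫

/-- `(y, u, v) ∈ ∂L(x, λ, μ)`: the saddle subdifferential of the Lagrangian (for `μ ≥ 0`). -/
def saddleSubdiff (f : X → ℝ) (h : X → Evec m1) (g : X → Evec m2)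
    (x : X) (lam : Evec m1) (mu : Evec m2) (y : X) (u : Evec m1) (v : Evec m2) : Prop :=
  (∀ x' : X, Lag f h g x lam mu + ⟪y, x' - x⟫ ≤ Lag f h g x' lam mu) ∧
  (∀ (lam' : Evec m1) (mu' : Evec m2), (∀ i, 0 ≤ mu' i) →
    Lag f h g x lam' mu' ≤ Lag f h g x lam mu - ⟪u, lam' - lam⟫ - ⟪v, mu' - mu⟫)

/-- The set of saddle points of the Lagrangian: points `(x, (λ, μ))` with `μ ≥ 0`
and `(0,0,0) ∈ ∂L(x, λ, μ)`. -/
def SaddlePoints (f : X → ℝ) (h : X → Evec m1) (g : X → Evec m2) :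
    Set (X × DualPair m1 m2) :=
  {s | ∃ (x : X) (lam : Evec m1) (mu : Evec m2), s = (x, mkDual lam mu) ∧
    (∀ i, 0 ≤ mu i) ∧ saddleSubdiff f h g x lam mu 0 0 0}

/-- `X*`: the solution set of the primal problem (P). -/
def PrimalOpt (f : X → ℝ) (h : X → Evec m1) (g : X → Evec m2) : Set X :=
  {x | h x = 0 ∧ (∀ i, g x i ≤ 0) ∧
    ∀ x' : X, h x' = 0 → (∀ i, g x' i ≤ 0) → f x ≤ f x'}

/-- The dual objective function `d(λ, μ) = inf_x L(x, λ, μ)`, valued in `EReal`. -/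
def dualFun (f : X → ℝ) (h : X → Evec m1) (g : X → Evec m2)
    (lam : Evec m1) (mu : Evec m2) : EReal :=
  ⨅ x : X, ((Lag f h g x lam mu : ℝ) : EReal)

/-- `P*`: the solution set of the dual problem (D). -/
def DualOpt (f : X → ℝ) (h : X → Evec m1) (g : X → Evec m2) : Set (DualPair m1 m2) :=
  {p | ∃ (lam : Evec m1) (mu : Evec m2), p = mkDual lam mu ∧ (∀ i, 0 ≤ mu i) ∧
    ∀ (lam' : Evec m1) (mu' : Evec m2), (∀ i, 0 ≤ mu' i) →
      dualFun f h g lam' mu' ≤ dualFun f h g lam mu}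

/-- The augmented Lagrangian with penalty parameter `c`. -/
def AugLag (f : X → ℝ) (h : X → Evec m1) (g : X → Evec m2) (c : ℝ)
    (x : X) (lam : Evec m1) (mu : Evec m2) : ℝ :=
  f x + ⟪lam, h x⟫ + (c / 2) * ‖h x‖ ^ 2 +
    (1 / (2 * c)) * (‖toE (fun i => max 0 (mu i + c * g x i))‖ ^ 2 - ‖mu‖ ^ 2)

/-- The inexact augmented Lagrangian method of Eckstein and Silva, with relative error
tolerance `σ ∈ [0,1)` and penalty parameters `c k` with `inf_k c k > 0`. -/
structure ALMSeq (f : X → ℝ) (h : X → Evec m1) (g : X → Evec m2)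
    (σ : ℝ) (c : ℕ → ℝ) (x y w : ℕ → X)
    (lam : ℕ → Evec m1) (mu : ℕ → Evec m2) : Prop where
  sigma_nonneg : 0 ≤ σ
  sigma_lt_one : σ < 1
  c_pos : ∀ k, 0 < c k
  c_inf : ∃ cmin > 0, ∀ k, cmin ≤ c k
  mu0_nonneg : ∀ i, 0 ≤ mu 0 i
  /-- `y k` is a subgradient at `x k` of `x ↦ L_{c_k}(x, λ^{k-1}, μ^{k-1})`. -/
  subgrad : ∀ k, 1 ≤ k → ∀ x' : X,
    AugLag f h g (c k) (x k) (lam (k - 1)) (mu (k - 1)) + ⟪y k, x' - x k⟫ ≤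
      AugLag f h g (c k) x' (lam (k - 1)) (mu (k - 1))
  /-- The relative error criterion. -/
  err : ∀ k, 1 ≤ k →
    (2 / c k) * |⟪w (k - 1) - x k, y k⟫| + ‖y k‖ ^ 2 ≤
      σ * (‖h (x k)‖ ^ 2 +
        ‖toE (fun i => min (mu (k - 1) i / c k) (-(g (x k) i)))‖ ^ 2)
  lam_update : ∀ k, 1 ≤ k → lam k = lam (k - 1) + c k • h (x k)
  mu_update : ∀ k, 1 ≤ k → mu k = toE (fun i => max 0 (mu (k - 1) i + c k * g (x k) i))
  w_update : ∀ k, 1 ≤ k → w k = w (k - 1) - c k • y k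

/-!
Each iteration is an inexact proximal step on the saddle operator `∂L`. Comparing the augmented
Lagrangian with `L(·, p^k)` along segments (this is where convexity of `f`, `g_i` and affinity of
`h` enter) shows `(y^k, u^k) ∈ ∂L(x^k, p^k)`. Monotonicity of `∂L` and the relative error criterion
then make `‖w^k - x*‖² + ‖p^k - p*‖²` decrease by at least `(1 - σ) c_k² ‖u^k‖²` for every saddle
point `(x*, p*)`. Hence `u^k → 0`, `y^k → 0`, and for a fixed saddle point `(x*, p*)` every cluster
point `q` of `(p^k)` satisfies `L(z, q) ≥ L(x*, p*)` for all `z`, so `(x*, q)` is again a saddle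
point. For two such `q, q'` the common term `‖w^k - x*‖²` cancels in the difference of the two
Fejér sequences, so `⟪p^k, q - q'⟫` converges; evaluating its limit along subsequences tending to
`q` and to `q'` gives `q = q'` (Opial's argument).
-/

open Topology

lemma max_zero_sq_le (s s₀ : ℝ) : max 0 s ^ 2 ≤ (max 0 s₀ + (s - s₀)) ^ 2 := by
  rcases le_or_gt s 0 with hs | hs
  · simpa [max_eq_left hs] using sq_nonneg (max 0 s₀ + (s - s₀))
  · rw [max_eq_right hs.le]
    nlinarith [le_max_left 0 s₀, le_max_right 0 s₀]

lemma max_zero_add_mul_eq_sub {c : ℝ} (hc : 0 < c) (m a : ℝ) :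
    max 0 (m + c * a) = m - c * min (m / c) (-a) := by
  rw [mul_min_of_nonneg _ _ hc.le, mul_div_cancel₀ _ hc.ne']
  rcases le_total 0 (m + c * a) with hs | hs
  · rw [max_eq_right hs, min_eq_right (by linarith)]; ring
  · rw [max_eq_left hs, min_eq_left (by linarith)]; ring

lemma sub_max_zero_mul_add_min_nonpos {c : ℝ} (hc : 0 < c) {m' : ℝ} (hm' : 0 ≤ m') (m a : ℝ) :
    (m' - max 0 (m + c * a)) * (a + min (m / c) (-a)) ≤ 0 := by
  have key : c * (a + min (m / c) (-a)) = min (m + c * a) 0 := by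
    rw [mul_add, mul_min_of_nonneg _ _ hc.le, mul_div_cancel₀ _ hc.ne', ← min_add_add_left]
    ring_nf
  rcases le_total 0 (m + c * a) with hs | hs
  · have : a + min (m / c) (-a) = 0 := by
      have := key; rw [min_eq_right hs] at this
      exact (mul_eq_zero.mp this).resolve_left hc.ne'
    rw [this, mul_zero]
  · rw [max_eq_left hs, sub_zero]
    have : a + min (m / c) (-a) ≤ 0 := by
      have := key; rw [min_eq_left hs] at this; nlinarith
    exact mul_nonpos_of_nonneg_of_nonpos hm' this

lemma toE_apply {m : ℕ} (v : Fin m → ℝ) (i : Fin m) : toE v i = v i := rfl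

lemma Evec.inner_eq_sum {m : ℕ} (a b : Evec m) : ⟪a, b⟫ = ∑ i, a i * b i := by
  simp [PiLp.inner_apply, mul_comm]

lemma Evec.norm_sq_eq_sum {m : ℕ} (a : Evec m) : ‖a‖ ^ 2 = ∑ i, a i ^ 2 := by
  simp [EuclideanSpace.norm_sq_eq]

lemma mkDual_sub {m1 m2 : ℕ} (a c : Evec m1) (b d : Evec m2) :
    mkDual a b - mkDual c d = mkDual (a - c) (b - d) := rfl

lemma smul_mkDual {m1 m2 : ℕ} (r : ℝ) (a : Evec m1) (b : Evec m2) :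
    r • mkDual a b = mkDual (r • a) (r • b) := rfl

lemma norm_mkDual_sq {m1 m2 : ℕ} (a : Evec m1) (b : Evec m2) :
    ‖mkDual a b‖ ^ 2 = ‖a‖ ^ 2 + ‖b‖ ^ 2 :=
  WithLp.prod_norm_sq_eq_of_L2 _

section

variable {E : Type*}

lemma lag_eq_add_inner (f : E → ℝ) (h : E → Evec m1) (g : E → Evec m2) (z : E)
    (p : DualPair m1 m2) : Lag f h g z p.ofLp.1 p.ofLp.2 = f z + ⟪p, mkDual (h z) (g z)⟫ :=
  add_assoc _ _ _

lemma lag_sub_lag (f : E → ℝ) (h : E → Evec m1) (g : E → Evec m2) (x x₀ : E) (lam : Evec m1)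
    (mu : Evec m2) :
    Lag f h g x lam mu - Lag f h g x₀ lam mu =
      f x - f x₀ + ⟪lam, h x - h x₀⟫ + ∑ i, mu i * (g x i - g x₀ i) := by
  simp only [Lag, inner_sub_right, Evec.inner_eq_sum, mul_sub, Finset.sum_sub_distrib]
  ring

lemma augLag_sub_le (f : E → ℝ) (h : E → Evec m1) (g : E → Evec m2) {c : ℝ} (hc : 0 < c)
    (x x₀ : E) (lam : Evec m1) (mu : Evec m2) :
    AugLag f h g c x lam mu - AugLag f h g c x₀ lam mu ≤
      Lag f h g x (lam + c • h x₀) (toE fun i => max 0 (mu i + c * g x₀ i)) -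
        Lag f h g x₀ (lam + c • h x₀) (toE fun i => max 0 (mu i + c * g x₀ i)) +
        c / 2 * (‖h x - h x₀‖ ^ 2 + ‖g x - g x₀‖ ^ 2) := by
  -- `s ↦ max 0 s ^ 2 / 2` has the 1-Lipschitz derivative `max 0`
  have hcoord : ∀ i, 1 / (2 * c) * (max 0 (mu i + c * g x i) ^ 2 - max 0 (mu i + c * g x₀ i) ^ 2) ≤
      max 0 (mu i + c * g x₀ i) * (g x i - g x₀ i) + c / 2 * (g x i - g x₀ i) ^ 2 := by
    intro i
    have := max_zero_sq_le (mu i + c * g x i) (mu i + c * g x₀ i)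
    rw [div_mul_eq_mul_div, one_mul, div_le_iff₀ (by positivity)]
    nlinarith
  have hsum := Finset.sum_le_sum fun i (_ : i ∈ Finset.univ) => hcoord i
  rw [lag_sub_lag, norm_sub_sq_real (h x), Evec.norm_sq_eq_sum (g x - g x₀)]
  simp only [AugLag, Evec.norm_sq_eq_sum (toE _), toE_apply, inner_add_left, real_inner_smul_left,
    inner_sub_right, real_inner_self_eq_norm_sq, PiLp.sub_apply, ← Finset.mul_sum,
    Finset.sum_add_distrib, Finset.sum_sub_distrib] at hsum ⊢
  rw [real_inner_comm (h x₀) (h x)]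
  linarith

lemma lag_le_of_multiplier_update (f : E → ℝ) (h : E → Evec m1) (g : E → Evec m2) {c : ℝ}
    (hc : 0 < c) (lam : Evec m1) (mu : Evec m2) (x₀ : E) {lam' : Evec m1} {mu' : Evec m2}
    (hmu' : ∀ i, 0 ≤ mu' i) :
    Lag f h g x₀ lam' mu' ≤
      Lag f h g x₀ (lam + c • h x₀) (toE fun i => max 0 (mu i + c * g x₀ i)) -
        ⟪-h x₀, lam' - (lam + c • h x₀)⟫ -
        ⟪toE fun i => min (mu i / c) (-g x₀ i), mu' - toE fun i => max 0 (mu i + c * g x₀ i)⟫ := by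
  set muP : Evec m2 := toE fun i => max 0 (mu i + c * g x₀ i)
  set v : Evec m2 := toE fun i => min (mu i / c) (-g x₀ i)
  have hcompl : ⟪mu' - muP, g x₀ + v⟫ ≤ 0 := by
    rw [Evec.inner_eq_sum]
    exact Finset.sum_nonpos fun i _ => sub_max_zero_mul_add_min_nonpos hc (hmu' i) _ _
  rw [inner_add_right, inner_sub_left, real_inner_comm v] at hcompl
  rw [Lag, Lag, inner_neg_left, inner_sub_right, real_inner_comm (h x₀) lam',
    real_inner_comm (h x₀)]
  linarith

variable [NormedAddCommGroup E] [InnerProductSpace ℝ E]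

lemma ConvexOn.sq_sub_le {φ : E → ℝ} (hφ : ConvexOn ℝ Set.univ φ) (x₀ v : E) {t : ℝ}
    (ht₀ : 0 < t) (ht₁ : t ≤ 1) :
    (φ (x₀ + t • v) - φ x₀) ^ 2 ≤ t ^ 2 * ((φ (x₀ + v) - φ x₀) ^ 2 + (φ x₀ - φ (x₀ - v)) ^ 2) := by
  have hline : ConvexOn ℝ Set.univ fun s : ℝ => φ (x₀ + s • v) := by
    have := hφ.comp_affineMap (AffineMap.lineMap x₀ (x₀ + v))
    simpa [Function.comp_def, AffineMap.lineMap_apply, add_comm] using this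
  have hlow := hline.secant_mono (a := 0) (x := -1) (y := t) trivial trivial trivial
    (by norm_num) ht₀.ne' (by linarith)
  have hupp := hline.secant_mono (a := 0) (x := t) (y := 1) trivial trivial trivial
    ht₀.ne' one_ne_zero ht₁
  simp only [zero_smul, add_zero, sub_zero, neg_smul, one_smul, div_one, ← sub_eq_add_neg,
    div_neg, neg_sub] at hlow hupp
  rw [le_div_iff₀ ht₀] at hlow
  rw [div_le_iff₀ ht₀] at hupp
  rcases le_total 0 (φ (x₀ + t • v) - φ x₀) with hd | hd
  · nlinarith [sq_nonneg ((φ x₀ - φ (x₀ - v)) * t)]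
  · nlinarith [sq_nonneg ((φ (x₀ + v) - φ x₀) * t)]

lemma ConvexOn.le_of_subgradient_of_sub_le {F G : E → ℝ} (hG : ConvexOn ℝ Set.univ G) {x₀ y : E}
    (hF : ∀ x, F x₀ + ⟪y, x - x₀⟫ ≤ F x)
    (hFG : ∀ x, ∃ C, ∀ t : ℝ, 0 < t → t ≤ 1 →
      F (x₀ + t • (x - x₀)) - F x₀ ≤ G (x₀ + t • (x - x₀)) - G x₀ + t ^ 2 * C)
    (x : E) : G x₀ + ⟪y, x - x₀⟫ ≤ G x := by
  obtain ⟨C, hC⟩ := hFG x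
  have hslope : ∀ t : ℝ, 0 < t → t ≤ 1 → ⟪y, x - x₀⟫ ≤ G x - G x₀ + t * C := by
    intro t ht₀ ht₁
    have hsub := hF (x₀ + t • (x - x₀))
    rw [add_sub_cancel_left, real_inner_smul_right] at hsub
    have hconv : G (x₀ + t • (x - x₀)) ≤ (1 - t) * G x₀ + t * G x := by
      rw [show x₀ + t • (x - x₀) = (1 - t) • x₀ + t • x by module]
      exact hG.2 (Set.mem_univ x₀) (Set.mem_univ x) (by linarith) ht₀.le (sub_add_cancel 1 t)
    nlinarith [hC t ht₀ ht₁]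
  have hlim : Tendsto (fun t : ℝ => G x - G x₀ + t * C) (𝓝[>] 0) (𝓝 (G x - G x₀)) := by
    have : Continuous fun t : ℝ => G x - G x₀ + t * C := by fun_prop
    simpa using (this.tendsto 0).mono_left nhdsWithin_le_nhds
  have hev : ∀ᶠ t in 𝓝[>] (0 : ℝ), ⟪y, x - x₀⟫ ≤ G x - G x₀ + t * C := by
    filter_upwards [Ioc_mem_nhdsGT one_pos] with t ht using hslope t ht.1 ht.2
  linarith [ge_of_tendsto hlim hev]

lemma convexOn_lag {f : E → ℝ} {h : E → Evec m1} {g : E → Evec m2}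
    (hf : ConvexOn ℝ Set.univ f) (hh : ∃ A : E →ᵃ[ℝ] Evec m1, ∀ z, h z = A z)
    (hg : ∀ i, ConvexOn ℝ Set.univ (fun z => g z i)) (lam : Evec m1) {mu : Evec m2}
    (hmu : ∀ i, 0 ≤ mu i) : ConvexOn ℝ Set.univ fun z => Lag f h g z lam mu := by
  obtain ⟨A, hA⟩ := hh
  have hlin : ConvexOn ℝ Set.univ fun z => ⟪lam, h z⟫ := by
    rw [funext hA]
    exact ((innerₛₗ ℝ lam).convexOn convex_univ).comp_affineMap A
  have hsum : ConvexOn ℝ Set.univ fun z => ⟪mu, g z⟫ := by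
    simp_rw [Evec.inner_eq_sum, ← Finset.sum_fn]
    exact Finset.sum_induction _ (ConvexOn ℝ Set.univ) (fun _ _ => ConvexOn.add)
      (convexOn_const 0 convex_univ) fun i _ => (hg i).smul (hmu i)
  exact (hf.add hlin).add hsum

lemma lag_subgradient_of_augLag_subgradient {f : E → ℝ} {h : E → Evec m1} {g : E → Evec m2}
    (hf : ConvexOn ℝ Set.univ f) (hh : ∃ A : E →ᵃ[ℝ] Evec m1, ∀ z, h z = A z)
    (hg : ∀ i, ConvexOn ℝ Set.univ (fun z => g z i)) {c : ℝ} (hc : 0 < c)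
    {lam : Evec m1} {mu : Evec m2} {x₀ y : E}
    (hy : ∀ x, AugLag f h g c x₀ lam mu + ⟪y, x - x₀⟫ ≤ AugLag f h g c x lam mu) (x : E) :
    Lag f h g x₀ (lam + c • h x₀) (toE fun i => max 0 (mu i + c * g x₀ i)) + ⟪y, x - x₀⟫ ≤
      Lag f h g x (lam + c • h x₀) (toE fun i => max 0 (mu i + c * g x₀ i)) := by
  refine (convexOn_lag hf hh hg _ fun i => le_max_left _ _).le_of_subgradient_of_sub_le
    (F := fun z => AugLag f h g c z lam mu) hy (fun x => ?_) x
  obtain ⟨A, hA⟩ := hh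
  set K : Fin m2 → ℝ := fun i => (g x i - g x₀ i) ^ 2 + (g x₀ i - g (x₀ - (x - x₀)) i) ^ 2
  refine ⟨c / 2 * (‖h x - h x₀‖ ^ 2 + ∑ i, K i), fun t ht₀ ht₁ => ?_⟩
  have hh_seg : h (x₀ + t • (x - x₀)) - h x₀ = t • (h x - h x₀) := by
    simp only [hA, ← vsub_eq_sub, ← AffineMap.linearMap_vsub, ← map_smul]
    congr 1
    simp [vsub_eq_sub]
  have hg_seg : ‖g (x₀ + t • (x - x₀)) - g x₀‖ ^ 2 ≤ t ^ 2 * ∑ i, K i := by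
    rw [Evec.norm_sq_eq_sum, Finset.mul_sum]
    refine Finset.sum_le_sum fun i _ => ?_
    simpa only [PiLp.sub_apply, add_sub_cancel] using (hg i).sq_sub_le x₀ (x - x₀) ht₀ ht₁
  have hh_sq : ‖h (x₀ + t • (x - x₀)) - h x₀‖ ^ 2 = t ^ 2 * ‖h x - h x₀‖ ^ 2 := by
    rw [hh_seg, norm_smul, mul_pow, Real.norm_eq_abs, sq_abs]
  have := augLag_sub_le f h g hc (x₀ + t • (x - x₀)) x₀ lam mu
  nlinarith

theorem saddleSubdiff_of_augLag_subgradient {f : E → ℝ} {h : E → Evec m1} {g : E → Evec m2}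
    (hf : ConvexOn ℝ Set.univ f) (hh : ∃ A : E →ᵃ[ℝ] Evec m1, ∀ z, h z = A z)
    (hg : ∀ i, ConvexOn ℝ Set.univ (fun z => g z i)) {c : ℝ} (hc : 0 < c)
    {lam : Evec m1} {mu : Evec m2} {x₀ y : E}
    (hy : ∀ x, AugLag f h g c x₀ lam mu + ⟪y, x - x₀⟫ ≤ AugLag f h g c x lam mu) :
    saddleSubdiff f h g x₀ (lam + c • h x₀) (toE fun i => max 0 (mu i + c * g x₀ i)) y (-h x₀)
      (toE fun i => min (mu i / c) (-g x₀ i)) :=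
  ⟨lag_subgradient_of_augLag_subgradient hf hh hg hc hy,
    fun _ _ hmu' => lag_le_of_multiplier_update f h g hc lam mu x₀ hmu'⟩

lemma norm_sq_add_norm_sq_le_of_relative_error {F : Type*} [NormedAddCommGroup F]
    [InnerProductSpace ℝ F] {c σ : ℝ} (hc : 0 < c) {w x y z : E} {p u q : F}
    (hmono : 0 ≤ ⟪y, x - z⟫ + ⟪u, p - c • u - q⟫)
    (herr : 2 / c * |⟪w - x, y⟫| + ‖y‖ ^ 2 ≤ σ * ‖u‖ ^ 2) :
    ‖w - c • y - z‖ ^ 2 + ‖p - c • u - q‖ ^ 2 ≤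
      ‖w - z‖ ^ 2 + ‖p - q‖ ^ 2 - (1 - σ) * c ^ 2 * ‖u‖ ^ 2 := by
  have hw : ‖w - c • y - z‖ ^ 2 =
      ‖w - z‖ ^ 2 - 2 * c * (⟪w - x, y⟫ + ⟪y, x - z⟫) + c ^ 2 * ‖y‖ ^ 2 := by
    rw [show w - c • y - z = (w - z) - c • y by abel, norm_sub_sq_real, real_inner_smul_right,
      norm_smul, mul_pow, Real.norm_eq_abs, sq_abs, real_inner_comm y (w - x), ← inner_add_right,
      sub_add_sub_cancel, real_inner_comm (w - z) y]
    ring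
  have hp : ‖p - c • u - q‖ ^ 2 =
      ‖p - q‖ ^ 2 - 2 * c * (⟪u, p - c • u - q⟫ + c * ‖u‖ ^ 2) + c ^ 2 * ‖u‖ ^ 2 := by
    rw [show p - c • u - q = (p - q) - c • u by abel, norm_sub_sq_real, real_inner_smul_right,
      norm_smul, mul_pow, Real.norm_eq_abs, sq_abs, inner_sub_right, real_inner_smul_right,
      real_inner_self_eq_norm_sq, real_inner_comm u]
    ring
  have hcross : -(2 * c * ⟪w - x, y⟫) + c ^ 2 * ‖y‖ ^ 2 ≤ σ * c ^ 2 * ‖u‖ ^ 2 := by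
    have h2 : c ^ 2 * (2 / c * |⟪w - x, y⟫| + ‖y‖ ^ 2) =
        2 * c * |⟪w - x, y⟫| + c ^ 2 * ‖y‖ ^ 2 := by
      field_simp
    nlinarith [neg_abs_le ⟪w - x, y⟫, mul_le_mul_of_nonneg_left herr (sq_nonneg c)]
  rw [hw, hp]
  nlinarith

lemma tendsto_inner_sub_of_tendsto_add_norm_sq {a : ℕ → E} {r : ℕ → ℝ} {q q' : E} {l l' : ℝ}
    (hq : Tendsto (fun k => r k + ‖a k - q‖ ^ 2) atTop (𝓝 l))
    (hq' : Tendsto (fun k => r k + ‖a k - q'‖ ^ 2) atTop (𝓝 l')) :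
    Tendsto (fun k => ⟪a k, q - q'⟫) atTop (𝓝 ((l' - l + ‖q‖ ^ 2 - ‖q'‖ ^ 2) / 2)) := by
  refine (((hq'.sub hq).add_const _).sub_const _).div_const 2 |>.congr fun k => ?_
  rw [norm_sub_sq_real, norm_sub_sq_real, inner_sub_right]
  ring

/-- Opial's lemma in finite dimension. -/
theorem exists_tendsto_of_tendsto_inner [ProperSpace E] {a : ℕ → E} {S : Set E}
    (hbdd : Bornology.IsBounded (Set.range a))
    (hS : ∀ q (φ : ℕ → ℕ), Tendsto φ atTop atTop → Tendsto (a ∘ φ) atTop (𝓝 q) → q ∈ S)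
    (hinner : ∀ q ∈ S, ∀ q' ∈ S, ∃ l, Tendsto (fun k => ⟪a k, q - q'⟫) atTop (𝓝 l)) :
    ∃ q ∈ S, Tendsto a atTop (𝓝 q) := by
  have huniq : ∀ q q' (φ ψ : ℕ → ℕ), Tendsto φ atTop atTop → Tendsto ψ atTop atTop →
      Tendsto (a ∘ φ) atTop (𝓝 q) → Tendsto (a ∘ ψ) atTop (𝓝 q') → q' = q := by
    intro q q' φ ψ hφ hψ hq hq'
    obtain ⟨l, hl⟩ := hinner q (hS q φ hφ hq) q' (hS q' ψ hψ hq')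
    have h₁ : ⟪q, q - q'⟫ = l := tendsto_nhds_unique (hq.inner tendsto_const_nhds) (hl.comp hφ)
    have h₂ : ⟪q', q - q'⟫ = l := tendsto_nhds_unique (hq'.inner tendsto_const_nhds) (hl.comp hψ)
    have : ⟪q - q', q - q'⟫ = 0 := by rw [inner_sub_left, h₁, h₂, sub_self]
    exact (sub_eq_zero.mp (inner_self_eq_zero.mp this)).symm
  obtain ⟨q, -, φ, hφ, hq⟩ := tendsto_subseq_of_bounded hbdd fun n => Set.mem_range_self n
  refine ⟨q, hS q φ hφ.tendsto_atTop hq, tendsto_of_subseq_tendsto fun ns hns => ?_⟩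
  obtain ⟨q', -, ψ, hψ, hq'⟩ := tendsto_subseq_of_bounded hbdd fun n => Set.mem_range_self (ns n)
  refine ⟨ψ, ?_⟩
  rwa [← huniq q q' φ (ns ∘ ψ) hφ.tendsto_atTop (hns.comp hψ.tendsto_atTop) hq hq']

lemma saddleSubdiff_zero_iff {f : E → ℝ} {h : E → Evec m1} {g : E → Evec m2} {x : E}
    {lam : Evec m1} {mu : Evec m2} :
    saddleSubdiff f h g x lam mu 0 0 0 ↔
      (∀ x', Lag f h g x lam mu ≤ Lag f h g x' lam mu) ∧
      ∀ lam' mu', (∀ i, 0 ≤ mu' i) → Lag f h g x lam' mu' ≤ Lag f h g x lam mu := by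
  simp only [saddleSubdiff, inner_zero_left, add_zero, sub_zero]

lemma saddleSubdiff_monotone {f : E → ℝ} {h : E → Evec m1} {g : E → Evec m2}
    {x₁ x₂ y₁ y₂ : E} {l₁ l₂ u₁ u₂ : Evec m1} {m₁ m₂ v₁ v₂ : Evec m2}
    (h₁ : saddleSubdiff f h g x₁ l₁ m₁ y₁ u₁ v₁) (hm₁ : ∀ i, 0 ≤ m₁ i)
    (h₂ : saddleSubdiff f h g x₂ l₂ m₂ y₂ u₂ v₂) (hm₂ : ∀ i, 0 ≤ m₂ i) :
    0 ≤ ⟪y₁ - y₂, x₁ - x₂⟫ + ⟪u₁ - u₂, l₁ - l₂⟫ + ⟪v₁ - v₂, m₁ - m₂⟫ := by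
  have a₁ := h₁.1 x₂
  have a₂ := h₂.1 x₁
  have a₃ := h₁.2 l₂ m₂ hm₂
  have a₄ := h₂.2 l₁ m₁ hm₁
  simp only [inner_sub_left, inner_sub_right] at a₁ a₂ a₃ a₄ ⊢
  linarith

/-- `(x, p) ∈ SaddlePoints f h g`, with the dual part kept as a single vector `p`. -/
def IsSaddlePt (f : E → ℝ) (h : E → Evec m1) (g : E → Evec m2) (x : E) (p : DualPair m1 m2) :
    Prop :=
  (∀ i, 0 ≤ p.ofLp.2 i) ∧ saddleSubdiff f h g x p.ofLp.1 p.ofLp.2 0 0 0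

namespace IsSaddlePt

variable {f : E → ℝ} {h : E → Evec m1} {g : E → Evec m2} {x : E} {p : DualPair m1 m2}

lemma mem_dualOpt (hp : IsSaddlePt f h g x p) : p ∈ DualOpt f h g := by
  obtain ⟨hmin, hmax⟩ := saddleSubdiff_zero_iff.mp hp.2
  refine ⟨p.ofLp.1, p.ofLp.2, rfl, hp.1, fun lam' mu' hmu' => ?_⟩
  calc dualFun f h g lam' mu' ≤ Lag f h g x lam' mu' := iInf_le _ x
    _ ≤ Lag f h g x p.ofLp.1 p.ofLp.2 := EReal.coe_le_coe (hmax lam' mu' hmu')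
    _ ≤ dualFun f h g p.ofLp.1 p.ofLp.2 := le_iInf fun z => EReal.coe_le_coe (hmin z)

lemma of_lag_le (hp : IsSaddlePt f h g x p) {q : DualPair m1 m2} (hq : ∀ i, 0 ≤ q.ofLp.2 i)
    (hle : ∀ z, Lag f h g x p.ofLp.1 p.ofLp.2 ≤ Lag f h g z q.ofLp.1 q.ofLp.2) :
    IsSaddlePt f h g x q := by
  obtain ⟨-, hmax⟩ := saddleSubdiff_zero_iff.mp hp.2
  have heq := le_antisymm (hmax _ _ hq) (hle x)
  exact ⟨hq, saddleSubdiff_zero_iff.mpr ⟨fun z => heq ▸ hle z,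
    fun lam' mu' hmu' => heq ▸ hmax lam' mu' hmu'⟩⟩

end IsSaddlePt

/-- The scaled dual step `u = (p - p⁺) / c` of an iteration with penalty `c`, new primal point `x`
and previous multipliers `mu` (see `ALMSeq.dual_succ`). -/
def dualResidual (h : E → Evec m1) (g : E → Evec m2) (c : ℝ) (x : E) (mu : Evec m2) :
    DualPair m1 m2 :=
  mkDual (-h x) (toE fun i => min (mu i / c) (-g x i))

namespace ALMSeq

variable {f : E → ℝ} {h : E → Evec m1} {g : E → Evec m2} {σ : ℝ} {c : ℕ → ℝ} {x y w : ℕ → E}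
  {lam : ℕ → Evec m1} {mu : ℕ → Evec m2}

lemma mu_succ (halg : ALMSeq f h g σ c x y w lam mu) (k : ℕ) :
    mu (k + 1) = toE fun i => max 0 (mu k i + c (k + 1) * g (x (k + 1)) i) :=
  halg.mu_update (k + 1) k.succ_pos

lemma mu_nonneg (halg : ALMSeq f h g σ c x y w lam mu) : ∀ k i, 0 ≤ mu k i
  | 0, i => halg.mu0_nonneg i
  | k + 1, i => by rw [halg.mu_succ k]; exact le_max_left _ _

lemma dual_succ (halg : ALMSeq f h g σ c x y w lam mu) (k : ℕ) :
    mkDual (lam (k + 1)) (mu (k + 1)) =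
      mkDual (lam k) (mu k) - c (k + 1) • dualResidual h g (c (k + 1)) (x (k + 1)) (mu k) := by
  rw [dualResidual, smul_mkDual, mkDual_sub, halg.mu_succ k, halg.lam_update (k + 1) k.succ_pos,
    smul_neg, sub_neg_eq_add]
  congr 1
  ext i
  exact max_zero_add_mul_eq_sub (halg.c_pos (k + 1)) _ _

lemma err_succ (halg : ALMSeq f h g σ c x y w lam mu) (k : ℕ) :
    2 / c (k + 1) * |⟪w k - x (k + 1), y (k + 1)⟫| + ‖y (k + 1)‖ ^ 2 ≤
      σ * ‖dualResidual h g (c (k + 1)) (x (k + 1)) (mu k)‖ ^ 2 := by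
  rw [dualResidual, norm_mkDual_sq, norm_neg]
  exact halg.err (k + 1) k.succ_pos

lemma norm_y_succ_le (halg : ALMSeq f h g σ c x y w lam mu) (k : ℕ) :
    ‖y (k + 1)‖ ≤ ‖dualResidual h g (c (k + 1)) (x (k + 1)) (mu k)‖ := by
  have herr := halg.err_succ k
  have hσ := halg.sigma_lt_one
  have habs : 0 ≤ 2 / c (k + 1) * |⟪w k - x (k + 1), y (k + 1)⟫| :=
    mul_nonneg (div_nonneg zero_le_two (halg.c_pos _).le) (abs_nonneg _)
  refine pow_le_pow_iff_left₀ (norm_nonneg _) (norm_nonneg _) two_ne_zero |>.mp ?_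
  nlinarith [sq_nonneg ‖dualResidual h g (c (k + 1)) (x (k + 1)) (mu k)‖]

lemma abs_inner_succ_le (halg : ALMSeq f h g σ c x y w lam mu) (k : ℕ) :
    |⟪w k - x (k + 1), y (k + 1)⟫| ≤
      σ / 2 * c (k + 1) * ‖dualResidual h g (c (k + 1)) (x (k + 1)) (mu k)‖ ^ 2 := by
  have herr := halg.err_succ k
  have hc := halg.c_pos (k + 1)
  have : 2 / c (k + 1) * |⟪w k - x (k + 1), y (k + 1)⟫| ≤
      σ * ‖dualResidual h g (c (k + 1)) (x (k + 1)) (mu k)‖ ^ 2 := by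
    nlinarith [sq_nonneg ‖y (k + 1)‖]
  rw [div_mul_eq_mul_div, div_le_iff₀ hc] at this
  nlinarith

section Convex

variable (halg : ALMSeq f h g σ c x y w lam mu) (hf : ConvexOn ℝ Set.univ f)
  (hh : ∃ A : E →ᵃ[ℝ] Evec m1, ∀ z, h z = A z) (hg : ∀ i, ConvexOn ℝ Set.univ (fun z => g z i))

include halg hf hh hg

lemma saddleSubdiff_succ (k : ℕ) :
    saddleSubdiff f h g (x (k + 1)) (lam (k + 1)) (mu (k + 1)) (y (k + 1)) (-h (x (k + 1)))
      (toE fun i => min (mu k i / c (k + 1)) (-g (x (k + 1)) i)) := by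
  rw [halg.mu_succ k, halg.lam_update (k + 1) k.succ_pos]
  exact saddleSubdiff_of_augLag_subgradient hf hh hg (halg.c_pos _) (halg.subgrad _ k.succ_pos)

section SaddlePoint

variable {xs : E} {ps : DualPair m1 m2} (hsp : IsSaddlePt f h g xs ps)

include hsp

lemma fejer_succ (k : ℕ) :
    ‖w (k + 1) - xs‖ ^ 2 + ‖mkDual (lam (k + 1)) (mu (k + 1)) - ps‖ ^ 2 ≤
      ‖w k - xs‖ ^ 2 + ‖mkDual (lam k) (mu k) - ps‖ ^ 2 -
        (1 - σ) * c (k + 1) ^ 2 * ‖dualResidual h g (c (k + 1)) (x (k + 1)) (mu k)‖ ^ 2 := by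
  have hmono : 0 ≤ ⟪y (k + 1), x (k + 1) - xs⟫ +
      ⟪dualResidual h g (c (k + 1)) (x (k + 1)) (mu k),
        mkDual (lam (k + 1)) (mu (k + 1)) - ps⟫ := by
    have := saddleSubdiff_monotone (halg.saddleSubdiff_succ hf hh hg k) (halg.mu_nonneg _)
      hsp.2 hsp.1
    simp only [sub_zero] at this
    exact this.trans_eq (add_assoc _ _ _)
  rw [halg.w_update (k + 1) k.succ_pos, halg.dual_succ k] at *
  exact norm_sq_add_norm_sq_le_of_relative_error (halg.c_pos _) hmono (halg.err_succ k)

lemma antitone_fejer :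
    Antitone fun k => ‖w k - xs‖ ^ 2 + ‖mkDual (lam k) (mu k) - ps‖ ^ 2 :=
  antitone_nat_of_succ_le fun k => (halg.fejer_succ hf hh hg hsp k).trans <| sub_le_self _ <|
    mul_nonneg (mul_nonneg (sub_nonneg.2 halg.sigma_lt_one.le) (sq_nonneg _)) (sq_nonneg _)

lemma exists_tendsto_fejer :
    ∃ l, Tendsto (fun k => ‖w k - xs‖ ^ 2 + ‖mkDual (lam k) (mu k) - ps‖ ^ 2) atTop (𝓝 l) :=
  ⟨_, tendsto_atTop_ciInf (halg.antitone_fejer hf hh hg hsp) ⟨0, by rintro _ ⟨k, rfl⟩; positivity⟩⟩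

lemma tendsto_mul_norm_dualResidual :
    Tendsto (fun k => c (k + 1) * ‖dualResidual h g (c (k + 1)) (x (k + 1)) (mu k)‖) atTop
      (𝓝 0) := by
  set D := fun k => ‖w k - xs‖ ^ 2 + ‖mkDual (lam k) (mu k) - ps‖ ^ 2
  obtain ⟨l, hl⟩ := halg.exists_tendsto_fejer hf hh hg hsp
  have hσ : 0 < 1 - σ := sub_pos.2 halg.sigma_lt_one
  have hdiff : Tendsto (fun k => (D k - D (k + 1)) / (1 - σ)) atTop (𝓝 0) := by
    simpa using (hl.sub (hl.comp (tendsto_add_atTop_nat 1))).div_const (1 - σ)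
  have hsq : Tendsto (fun k => (c (k + 1) * ‖dualResidual h g (c (k + 1)) (x (k + 1)) (mu k)‖) ^ 2)
      atTop (𝓝 0) := by
    refine squeeze_zero (fun k => sq_nonneg _) (fun k => ?_) hdiff
    rw [le_div_iff₀ hσ]
    linarith [halg.fejer_succ hf hh hg hsp k]
  simpa using hsq.sqrt.congr fun k => Real.sqrt_sq (mul_nonneg (halg.c_pos _).le (norm_nonneg _))

lemma lag_le_lag_succ_add (k : ℕ) (z : E) :
    Lag f h g xs ps.ofLp.1 ps.ofLp.2 ≤ Lag f h g z (lam (k + 1)) (mu (k + 1)) +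
      (‖dualResidual h g (c (k + 1)) (x (k + 1)) (mu k)‖ *
          ‖ps - mkDual (lam (k + 1)) (mu (k + 1))‖ +
        ‖y (k + 1)‖ * ‖z - w k‖ +
        σ / 2 * c (k + 1) * ‖dualResidual h g (c (k + 1)) (x (k + 1)) (mu k)‖ ^ 2) := by
  -- `L(xs, ps) ≤ L(x⁺, ps) ≤ L(x⁺, p⁺) - ⟪u, ps - p⁺⟫ ≤ L(z, p⁺) - ⟪y, z - x⁺⟫ - ⟪u, ps - p⁺⟫`,
  -- and `⟪y, z - x⁺⟫` is split through `w k`, where the error criterion controls it.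
  have hs := halg.saddleSubdiff_succ hf hh hg k
  have hxz := hs.1 z
  have hp : Lag f h g (x (k + 1)) ps.ofLp.1 ps.ofLp.2 ≤
      Lag f h g (x (k + 1)) (lam (k + 1)) (mu (k + 1)) -
        ⟪dualResidual h g (c (k + 1)) (x (k + 1)) (mu k), ps - mkDual (lam (k + 1)) (mu (k + 1))⟫ :=
    (hs.2 _ _ hsp.1).trans_eq (sub_sub _ _ _)
  have hxs := (saddleSubdiff_zero_iff.mp hsp.2).1 (x (k + 1))
  have hsplit :
      ⟪y (k + 1), z - x (k + 1)⟫ = ⟪y (k + 1), z - w k⟫ + ⟪w k - x (k + 1), y (k + 1)⟫ := by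
    rw [real_inner_comm (y (k + 1)) (w k - x (k + 1)), ← inner_add_right, sub_add_sub_cancel]
  have hu := abs_real_inner_le_norm (dualResidual h g (c (k + 1)) (x (k + 1)) (mu k))
    (ps - mkDual (lam (k + 1)) (mu (k + 1)))
  have hu' := neg_abs_le
    ⟪dualResidual h g (c (k + 1)) (x (k + 1)) (mu k), ps - mkDual (lam (k + 1)) (mu (k + 1))⟫
  have hy := neg_abs_le ⟪y (k + 1), z - w k⟫
  have hy' := abs_real_inner_le_norm (y (k + 1)) (z - w k)
  have hw := neg_abs_le ⟪w k - x (k + 1), y (k + 1)⟫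
  have hw' := halg.abs_inner_succ_le k
  linarith

lemma norm_sub_le_sqrt_fejer (k : ℕ) :
    ‖w k - xs‖ ≤ √(‖w 0 - xs‖ ^ 2 + ‖mkDual (lam 0) (mu 0) - ps‖ ^ 2) ∧
      ‖mkDual (lam k) (mu k) - ps‖ ≤ √(‖w 0 - xs‖ ^ 2 + ‖mkDual (lam 0) (mu 0) - ps‖ ^ 2) := by
  have := halg.antitone_fejer hf hh hg hsp k.zero_le
  exact ⟨Real.le_sqrt_of_sq_le (by nlinarith [sq_nonneg ‖mkDual (lam k) (mu k) - ps‖]),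
    Real.le_sqrt_of_sq_le (by nlinarith [sq_nonneg ‖w k - xs‖])⟩

lemma tendsto_norm_dualResidual :
    Tendsto (fun k => ‖dualResidual h g (c (k + 1)) (x (k + 1)) (mu k)‖) atTop (𝓝 0) := by
  obtain ⟨cmin, hcmin, hc⟩ := halg.c_inf
  refine squeeze_zero (fun _ => norm_nonneg _) (fun k => ?_)
    (by simpa using (halg.tendsto_mul_norm_dualResidual hf hh hg hsp).div_const cmin)
  rw [le_div_iff₀ hcmin, mul_comm]
  exact mul_le_mul_of_nonneg_right (hc _) (norm_nonneg _)

lemma tendsto_lag_error (z : E) :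
    Tendsto (fun k =>
      ‖dualResidual h g (c (k + 1)) (x (k + 1)) (mu k)‖ * ‖ps - mkDual (lam (k + 1)) (mu (k + 1))‖ +
        ‖y (k + 1)‖ * ‖z - w k‖ +
        σ / 2 * c (k + 1) * ‖dualResidual h g (c (k + 1)) (x (k + 1)) (mu k)‖ ^ 2) atTop (𝓝 0) := by
  set R := √(‖w 0 - xs‖ ^ 2 + ‖mkDual (lam 0) (mu 0) - ps‖ ^ 2)
  have hu := halg.tendsto_norm_dualResidual hf hh hg hsp
  have hcu := halg.tendsto_mul_norm_dualResidual hf hh hg hsp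
  have hσ := halg.sigma_nonneg
  have hlim : Tendsto (fun k => ‖dualResidual h g (c (k + 1)) (x (k + 1)) (mu k)‖ * R +
      ‖dualResidual h g (c (k + 1)) (x (k + 1)) (mu k)‖ * (‖z - xs‖ + R) +
      σ / 2 * (c (k + 1) * ‖dualResidual h g (c (k + 1)) (x (k + 1)) (mu k)‖ *
        ‖dualResidual h g (c (k + 1)) (x (k + 1)) (mu k)‖)) atTop (𝓝 0) := by
    simpa using ((hu.mul_const R).add (hu.mul_const _)).add ((hcu.mul hu).const_mul (σ / 2))
  refine squeeze_zero (fun k => by have := halg.c_pos (k + 1); positivity) (fun k => ?_) hlim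
  obtain ⟨hwR, -⟩ := halg.norm_sub_le_sqrt_fejer hf hh hg hsp k
  obtain ⟨-, hpR⟩ := halg.norm_sub_le_sqrt_fejer hf hh hg hsp (k + 1)
  have hy := halg.norm_y_succ_le k
  have hz := norm_sub_le_norm_sub_add_norm_sub z xs (w k)
  rw [norm_sub_rev] at hpR
  rw [norm_sub_rev xs] at hz
  gcongr ?_ + ?_ + ?_
  · exact mul_le_mul_of_nonneg_left hpR (norm_nonneg _)
  · exact mul_le_mul hy (by linarith) (norm_nonneg _) (norm_nonneg _)
  · exact le_of_eq (by ring)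

lemma isSaddlePt_of_tendsto {φ : ℕ → ℕ} (hφ : Tendsto φ atTop atTop) {q : DualPair m1 m2}
    (hq : Tendsto (fun j => mkDual (lam (φ j + 1)) (mu (φ j + 1))) atTop (𝓝 q)) :
    IsSaddlePt f h g xs q := by
  refine hsp.of_lag_le (fun i => ?_) fun z => ?_
  · have hcont : Continuous fun p : DualPair m1 m2 => p.ofLp.2 i := by fun_prop
    exact ge_of_tendsto' ((hcont.tendsto q).comp hq) fun j => halg.mu_nonneg _ i
  · have hlag : Tendsto (fun j => Lag f h g z (lam (φ j + 1)) (mu (φ j + 1))) atTop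
        (𝓝 (Lag f h g z q.ofLp.1 q.ofLp.2)) := by
      rw [lag_eq_add_inner]
      exact (tendsto_const_nhds.add (hq.inner tendsto_const_nhds)).congr fun j =>
        (lag_eq_add_inner f h g z _).symm
    refine le_of_tendsto_of_tendsto' tendsto_const_nhds
      (by simpa using hlag.add ((halg.tendsto_lag_error hf hh hg hsp z).comp hφ))
      fun j => halg.lag_le_lag_succ_add hf hh hg hsp (φ j) z

end SaddlePoint

lemma exists_tendsto_inner {xs : E} {q q' : DualPair m1 m2} (hq : IsSaddlePt f h g xs q)
    (hq' : IsSaddlePt f h g xs q') :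
    ∃ l, Tendsto (fun k => ⟪mkDual (lam (k + 1)) (mu (k + 1)), q - q'⟫) atTop (𝓝 l) := by
  obtain ⟨l, hl⟩ := halg.exists_tendsto_fejer hf hh hg hq
  obtain ⟨l', hl'⟩ := halg.exists_tendsto_fejer hf hh hg hq'
  exact ⟨_, tendsto_inner_sub_of_tendsto_add_norm_sq (hl.comp (tendsto_add_atTop_nat 1))
    (hl'.comp (tendsto_add_atTop_nat 1))⟩

end Convex

end ALMSeq

end

theorem eckstein_silva_alm_dual_sequence_converges_general {f : X → ℝ} {h : X → Evec m1} {g : X → Evec m2}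
    (hf : ConvexOn ℝ Set.univ f)
    (hh : ∃ A : X →ᵃ[ℝ] Evec m1, ∀ z, h z = A z)
    (hg1 : ∀ i, ConvexOn ℝ Set.univ (fun z => g z i))
    {σ : ℝ} {c : ℕ → ℝ} {x y w : ℕ → X} {lam : ℕ → Evec m1} {mu : ℕ → Evec m2}
    (halg : ALMSeq f h g σ c x y w lam mu)
    (hsad : (SaddlePoints f h g).Nonempty)
 :
    ∃ pinf ∈ DualOpt f h g,
      Tendsto (fun k => mkDual (lam k) (mu k)) atTop (nhds pinf) := by
  obtain ⟨-, xs, ls, ms, -, hsp⟩ := hsad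
  replace hsp : IsSaddlePt f h g xs (mkDual ls ms) := hsp
  have hbdd : Bornology.IsBounded (Set.range fun k => mkDual (lam (k + 1)) (mu (k + 1))) :=
    (Metric.isBounded_closedBall (x := mkDual ls ms)).subset <| Set.range_subset_iff.2 fun k =>
      mem_closedBall_iff_norm.2 (halg.norm_sub_le_sqrt_fejer hf hh hg1 hsp (k + 1)).2
  obtain ⟨q, hq, hlim⟩ := exists_tendsto_of_tendsto_inner hbdd
    (fun _ _ hφ hq => halg.isSaddlePt_of_tendsto hf hh hg1 hsp hφ hq)
    (fun _ hq _ hq' => halg.exists_tendsto_inner hf hh hg1 hq hq')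
  exact ⟨q, IsSaddlePt.mem_dualOpt hq, (tendsto_add_atTop_iff_nat 1).1 hlim⟩

theorem eckstein_silva_alm_dual_sequence_converges {f : X → ℝ} {h : X → Evec m1} {g : X → Evec m2}
    (hf : ConvexOn ℝ Set.univ f)
    (hh : ∃ A : X →ᵃ[ℝ] Evec m1, ∀ z, h z = A z)
    (hg1 : ∀ i, ConvexOn ℝ Set.univ (fun z => g z i))
    (hg2 : ∀ i, ContDiff ℝ 1 (fun z => g z i))
    {σ : ℝ} {c : ℕ → ℝ} {x y w : ℕ → X} {lam : ℕ → Evec m1} {mu : ℕ → Evec m2}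
    (halg : ALMSeq f h g σ c x y w lam mu)
    (hsad : (SaddlePoints f h g).Nonempty)
 :
    ∃ pinf ∈ DualOpt f h g,
      Tendsto (fun k => mkDual (lam k) (mu k)) atTop (nhds pinf) :=
  eckstein_silva_alm_dual_sequence_converges_general hf hh hg1 halg hsad
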